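/- arXiv:1911.04961 — 3 statements merged into one kernel-verified Lean document; each statement's English description precedes it below -/
import Mathlib

section
/- Let G be a 3-γc-critical graph, u and v non-adjacent vertices, and D a minimum connected dominating set of G + uv with u ∈ D and v ∉ D. Then no vertex of D is adjacent in G to v. -/
open SimpleGraph Finset

variable {V : Type*}

/-- The graph `G` with the extra edge `uv` added. -/
def SimpleGraph.addEdge (G : SimpleGraph V) (u v : V) : SimpleGraph V :=
  G ⊔ SimpleGraph.fromEdgeSet {s(u, v)}

/-- `D` is a connected dominating set of `G`. -/
def SimpleGraph.IsCDS (G : SimpleGraph V) (D : Set V) : Prop :=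
  (∀ v : V, v ∈ D ∨ ∃ u ∈ D, G.Adj u v) ∧ (G.induce D).Connected

/-- The connected domination number. -/
noncomputable def SimpleGraph.cdn [Fintype V] (G : SimpleGraph V) : ℕ :=
  sInf {n | ∃ D : Finset V, D.card = n ∧ G.IsCDS ↑D}

/-- `G` is a `3`-`γ_c`-critical graph. -/
def SimpleGraph.IsCritical3 [Fintype V] (G : SimpleGraph V) : Prop :=
  G.Connected ∧ G.cdn = 3 ∧
    ∀ u v : V, u ≠ v → ¬G.Adj u v → (G.addEdge u v).cdn < 3

/-- `s` is an independent set of `G`. -/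
def SimpleGraph.IsIndepSet' (G : SimpleGraph V) (s : Set V) : Prop :=
  s.Pairwise (fun a b => ¬G.Adj a b)

/-- The independence number. -/
noncomputable def SimpleGraph.indepNum' [Fintype V] (G : SimpleGraph V) : ℕ :=
  sSup {n | ∃ s : Finset V, G.IsIndepSet' ↑s ∧ s.card = n}

/-- `S` is a vertex cut: removing it leaves a non-connected graph. -/
def SimpleGraph.IsVertexCut [Fintype V] (G : SimpleGraph V) (S : Finset V) : Prop :=
  ¬(G.induce ((↑S : Set V)ᶜ)).Connected

/-- The vertex connectivity: minimum size of a vertex cut. -/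
noncomputable def SimpleGraph.conn [Fintype V] (G : SimpleGraph V) : ℕ :=
  sInf {n | ∃ S : Finset V, S.card = n ∧ G.IsVertexCut S}

namespace SimpleGraph

lemma induce_addEdge_of_notMem (G : SimpleGraph V) {u v : V} {D : Set V} (hvD : v ∉ D) :
    (G.addEdge u v).induce D = G.induce D := by
  ext a b
  simp only [comap_adj, Function.Embedding.coe_subtype, addEdge, sup_adj, fromEdgeSet_adj,
    Set.mem_singleton_iff, Sym2.eq, Sym2.rel_iff', Prod.mk.injEq, Prod.swap_prod_mk]
  constructor
  · rintro (h | ⟨⟨_, rfl⟩ | ⟨rfl, _⟩, _⟩)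
    · exact h
    · exact absurd b.2 hvD
    · exact absurd a.2 hvD
  · exact Or.inl

lemma IsCDS.of_addEdge {G : SimpleGraph V} {u v : V} {D : Set V} (hD : (G.addEdge u v).IsCDS D)
    (hvD : v ∉ D) (hv : ∃ x ∈ D, G.Adj x v) : G.IsCDS D := by
  obtain ⟨hdom, hconn⟩ := hD
  refine ⟨fun w ↦ ?_, G.induce_addEdge_of_notMem hvD ▸ hconn⟩
  rcases hdom w with hw | ⟨d, hd, hG | hnew⟩
  · exact Or.inl hw
  · exact Or.inr ⟨d, hd, hG⟩
  · simp only [fromEdgeSet_adj, Set.mem_singleton_iff, Sym2.eq, Sym2.rel_iff', Prod.mk.injEq,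
      Prod.swap_prod_mk] at hnew
    rcases hnew with ⟨⟨rfl, rfl⟩ | ⟨rfl, rfl⟩, _⟩
    · exact Or.inr hv
    · exact absurd hd hvD

lemma cdn_le_card [Fintype V] {G : SimpleGraph V} {D : Finset V} (hD : G.IsCDS D) :
    G.cdn ≤ D.card :=
  Nat.sInf_le ⟨D, rfl, hD⟩

lemma cdn_eq_card [Fintype V] {G : SimpleGraph V} {D : Finset V} (hD : G.IsCDS D)
    (hmin : ∀ D' : Finset V, G.IsCDS D' → D.card ≤ D'.card) : G.cdn = D.card := by
  obtain ⟨D', hD'card, hD'⟩ := Nat.sInf_mem (⟨D.card, D, rfl, hD⟩ :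
    {n | ∃ D' : Finset V, D'.card = n ∧ G.IsCDS ↑D'}.Nonempty)
  exact le_antisymm (cdn_le_card hD) (by rw [cdn, ← hD'card]; exact hmin D' hD')

end SimpleGraph

theorem stmt_2_general {V : Type*} [Fintype V] (G : SimpleGraph V)
    (hG : G.IsCritical3) (u v : V) (huv : u ≠ v) (hadj : ¬G.Adj u v)
    (D : Finset V) (hD : (G.addEdge u v).IsCDS ↑D)
    (hmin : ∀ D' : Finset V, (G.addEdge u v).IsCDS ↑D' → D.card ≤ D'.card)
    (hvD : v ∉ D) :
    ∀ x ∈ D, ¬G.Adj x v := by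
  intro x hx hxv
  obtain ⟨-, hcdn, hcrit⟩ := hG
  have hsmall : D.card < 3 := cdn_eq_card hD hmin ▸ hcrit u v huv hadj
  have hlarge : 3 ≤ D.card := hcdn ▸ cdn_le_card (hD.of_addEdge hvD ⟨x, hx, hxv⟩)
  omega

theorem stmt_2 {V : Type*} [Fintype V] (G : SimpleGraph V)
    (hG : G.IsCritical3) (u v : V) (huv : u ≠ v) (hadj : ¬G.Adj u v)
    (D : Finset V) (hD : (G.addEdge u v).IsCDS ↑D)
    (hmin : ∀ D' : Finset V, (G.addEdge u v).IsCDS ↑D' → D.card ≤ D'.card)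
    (huD : u ∈ D) (hvD : v ∉ D) :
    ∀ x ∈ D, ¬G.Adj x v :=
  stmt_2_general G hG u v huv hadj D hD hmin hvD
end

section
/- Every graph G in the family 𝒢₁(b₀, b₁, ..., b_{s−1}) is 3-γc-critical, i.e., γc(G) = 3 and γc(G + uv) = 2 for every pair of non-adjacent vertices u, v. -/
open SimpleGraph Finset

variable {V : Type*}

/-- One-sided description of the edges in the family `𝒢₁(b₀, …, b_{s-1})`.
`A i` (for `0 ≤ i ≤ s`) are the vertices `aᵢ`, `B j` (for `0 ≤ j ≤ s-1`) the sets `Bⱼ`,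
`x` the special vertex, and `bb` the fixed vertex `b ∈ B₀`. -/
def G1Half {V : Type*} (s : ℕ) (A : ℕ → V) (B : ℕ → Finset V) (x bb : V) (p q : V) : Prop :=
  (p = A 0 ∧ (q = x ∨ ∃ j < s, q ∈ B j)) ∨
  (∃ i, 1 ≤ i ∧ i ≤ s - 1 ∧ p = A i ∧ (q = x ∨ ∃ j < s, j ≠ i ∧ q ∈ B j)) ∨
  (p = A s ∧ ∃ j, 1 ≤ j ∧ j ≤ s - 1 ∧ q ∈ B j) ∨
  (p = x ∧ q ≠ bb ∧ q ≠ x ∧ q ≠ A s) ∨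
  ((∃ j, 1 ≤ j ∧ j ≤ s - 1 ∧ p ∈ B j) ∧ (∃ k, 1 ≤ k ∧ k ≤ s - 1 ∧ q ∈ B k)) ∨
  (p ∈ B 0 ∧ q ∈ B 0)

/-- `G` is the graph in the family `𝒢₁(b₀, …, b_{s-1})` built from the given data. -/
def SimpleGraph.G1Witness {V : Type*} (G : SimpleGraph V)
    (s : ℕ) (A : ℕ → V) (B : ℕ → Finset V) (x bb : V) : Prop :=
  2 ≤ s ∧
  (∀ i ≤ s, ∀ j ≤ s, A i = A j → i = j) ∧
  (∀ j < s, (B j).Nonempty) ∧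
  (∀ i < s, ∀ j < s, i ≠ j → Disjoint (B i) (B j)) ∧
  (∀ i ≤ s, ∀ j < s, A i ∉ B j) ∧
  (∀ j < s, x ∉ B j) ∧ (∀ i ≤ s, x ≠ A i) ∧
  bb ∈ B 0 ∧
  (∀ z : V, (∃ i ≤ s, z = A i) ∨ (∃ j < s, z ∈ B j) ∨ z = x) ∧
  ∀ p q : V, G.Adj p q ↔ p ≠ q ∧ (G1Half s A B x bb p q ∨ G1Half s A B x bb q p)

/-!
A dominating vertex would need to be adjacent to all others, but every vertex has two
non-neighbours; so after adding one edge `uv` there is still no dominating vertex, and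
`γc(G + uv) = 2` amounts to exhibiting a dominating edge of `G + uv`, which is done separately
for each of the seven kinds of non-edge.

There is no dominating edge in `G` itself: it would have to meet the closed neighbourhood of
`aₛ` (namely `aₛ` and `B₁ ∪ ⋯ ∪ B_{s-1}`) and that of `b` (namely `B₀` and `a₀, …, a_{s-1}`).
These are disjoint, and the only edges between them join some `c ∈ Bₖ` to some `aᵢ` with
`i ≠ k`, which leaves `aₖ` undominated. Finally `{a₀, x, c}` with `c ∈ B₁` is a connected
dominating set, so `γc(G) = 3`.
-/

namespace SimpleGraph

variable {G : SimpleGraph V}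

theorem addEdge_comm (G : SimpleGraph V) (u v : V) : G.addEdge u v = G.addEdge v u := by
  rw [addEdge, addEdge, Sym2.eq_swap]

theorem addEdge_adj {u v a b : V} :
    (G.addEdge u v).Adj a b ↔ G.Adj a b ∨ a ≠ b ∧ (a = u ∧ b = v ∨ a = v ∧ b = u) := by
  simp only [addEdge, sup_adj, fromEdgeSet_adj, Set.mem_singleton_iff, Sym2.eq_iff]
  tauto

theorem Adj.addEdge {a b : V} (hab : G.Adj a b) (u v : V) : (G.addEdge u v).Adj a b :=
  Or.inl hab

theorem addEdge_adj_self {u v : V} (huv : u ≠ v) : (G.addEdge u v).Adj u v :=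
  addEdge_adj.2 (Or.inr ⟨huv, Or.inl ⟨rfl, rfl⟩⟩)

def IsDominatingEdge (G : SimpleGraph V) (p q : V) : Prop :=
  G.Adj p q ∧ ∀ z, z = p ∨ z = q ∨ G.Adj p z ∨ G.Adj q z

theorem IsDominatingEdge.symm {p q : V} (h : G.IsDominatingEdge p q) : G.IsDominatingEdge q p :=
  ⟨h.1.symm, fun z => by rcases h.2 z with h | h | h | h <;> tauto⟩

theorem isDominatingEdge_addEdge {p q u v : V} (hpq : (G.addEdge u v).Adj p q)
    (hu : u = p ∨ u = q) (huv : u ≠ v) (hdom : ∀ z ≠ v, z = p ∨ z = q ∨ G.Adj p z ∨ G.Adj q z) :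
    (G.addEdge u v).IsDominatingEdge p q := by
  refine ⟨hpq, fun z => ?_⟩
  by_cases hzv : z = v
  · subst hzv
    rcases hu with rfl | rfl
    · exact Or.inr (Or.inr (Or.inl (addEdge_adj_self huv)))
    · exact Or.inr (Or.inr (Or.inr (addEdge_adj_self huv)))
  · rcases hdom z hzv with h | h | h | h
    exacts [Or.inl h, Or.inr (Or.inl h), Or.inr (Or.inr (Or.inl (h.addEdge u v))),
      Or.inr (Or.inr (Or.inr (h.addEdge u v)))]

theorem induce_connected_of_forall_adj {D : Set V} {c : V} (hc : c ∈ D)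
    (hadj : ∀ d ∈ D, d ≠ c → G.Adj c d) : (G.induce D).Connected := by
  refine G.induce_connected_of_patches c hc fun {d} hd => ?_
  by_cases hdc : d = c
  · subst hdc
    exact ⟨{d}, Set.singleton_subset_iff.2 hd, rfl, rfl, Reachable.refl _⟩
  · exact ⟨{c, d}, Set.insert_subset hc (Set.singleton_subset_iff.2 hd), by simp, by simp,
      (induce_pair_connected_of_adj (hadj d hd hdc)).preconnected _ _⟩

theorem IsCDS.nonempty {D : Set V} (hD : G.IsCDS D) : D.Nonempty :=
  let ⟨⟨d, hd⟩⟩ := hD.2.nonempty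
  ⟨d, hd⟩

theorem isCDS_singleton_iff {w : V} : G.IsCDS {w} ↔ ∀ z, z = w ∨ G.Adj w z := by
  refine ⟨fun hD z => ?_, fun hw => ⟨fun z => ?_, ?_⟩⟩
  · simpa using hD.1 z
  · simpa using hw z
  · exact induce_connected_of_forall_adj rfl fun d hd hdw => absurd hd hdw

theorem isCDS_pair_iff {p q : V} (hpq : p ≠ q) :
    G.IsCDS {p, q} ↔ G.IsDominatingEdge p q := by
  refine ⟨fun hD => ⟨?_, fun z => by simpa [or_assoc] using hD.1 z⟩,
    fun hD => ⟨fun z => by simpa [or_assoc] using hD.2 z, ?_⟩⟩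
  · obtain ⟨w⟩ := hD.2.preconnected ⟨p, by simp⟩ ⟨q, by simp⟩
    have hadj : G.Adj p w.snd := w.adj_snd (w.not_nil_of_ne (by simpa using hpq))
    rcases w.snd.2 with hp | hq
    · exact absurd (hp ▸ hadj) G.irrefl
    · rwa [hq] at hadj
  · exact induce_connected_of_forall_adj (Set.mem_insert p _) fun d hd hdp => by
      rcases hd with rfl | rfl
      exacts [absurd rfl hdp, hD.1]

theorem isCDS_of_adj_of_adj {c p q : V} (hp : G.Adj c p) (hq : G.Adj c q)
    (hdom : ∀ z, z = c ∨ z = p ∨ z = q ∨ G.Adj c z ∨ G.Adj p z ∨ G.Adj q z) :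
    G.IsCDS {c, p, q} := by
  refine ⟨fun z => by simpa [or_assoc] using hdom z,
    induce_connected_of_forall_adj (Set.mem_insert c _) ?_⟩
  rintro d (rfl | rfl | rfl) hdc
  exacts [absurd rfl hdc, hp, hq]

theorem exists_ne_not_adj_addEdge
    (h2 : ∀ w, ∃ z₁ z₂, z₁ ≠ z₂ ∧ z₁ ≠ w ∧ z₂ ≠ w ∧ ¬G.Adj w z₁ ∧ ¬G.Adj w z₂) (u v w : V) :
    ∃ z ≠ w, ¬(G.addEdge u v).Adj w z := by
  obtain ⟨z₁, z₂, h12, hz₁, hz₂, hn₁, hn₂⟩ := h2 w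
  by_contra! hadj
  have e₁ := (addEdge_adj.1 (hadj z₁ hz₁)).resolve_left hn₁
  have e₂ := (addEdge_adj.1 (hadj z₂ hz₂)).resolve_left hn₂
  grind

theorem two_le_card_of_isCDS (hw : ∀ w, ∃ z ≠ w, ¬G.Adj w z) {D : Finset V}
    (hD : G.IsCDS D) : 2 ≤ D.card := by
  have hpos : 0 < D.card := Finset.card_pos.2 (Finset.coe_nonempty.1 hD.nonempty)
  by_contra! hlt
  obtain ⟨w, rfl⟩ := Finset.card_eq_one.1 (by omega : D.card = 1)
  obtain ⟨z, hzw, hz⟩ := hw w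
  rw [Finset.coe_singleton, isCDS_singleton_iff] at hD
  exact (hD z).elim hzw hz

theorem three_le_card_of_isCDS (hw : ∀ w, ∃ z ≠ w, ¬G.Adj w z)
    (he : ∀ p q, ¬G.IsDominatingEdge p q) {D : Finset V} (hD : G.IsCDS D) : 3 ≤ D.card := by
  classical
  have h2 := two_le_card_of_isCDS hw hD
  by_contra! hlt
  obtain ⟨p, q, hpq, rfl⟩ := Finset.card_eq_two.1 (by omega : D.card = 2)
  rw [Finset.coe_pair, isCDS_pair_iff hpq] at hD
  exact he p q hD

section Finite

variable [Fintype V]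

theorem cdn_eq_card_of_isCDS {D : Finset V} (hD : G.IsCDS D)
    (hmin : ∀ D' : Finset V, G.IsCDS D' → D.card ≤ D'.card) : G.cdn = D.card :=
  le_antisymm (Nat.sInf_le ⟨D, rfl, hD⟩)
    (le_csInf ⟨_, D, rfl, hD⟩ fun _ ⟨D', hD', hc⟩ => hD' ▸ hmin D' hc)

theorem cdn_eq_two {p q : V} (hpq : G.IsDominatingEdge p q) (hw : ∀ w, ∃ z ≠ w, ¬G.Adj w z) :
    G.cdn = 2 := by
  classical
  have hne : p ≠ q := hpq.1.ne
  have hcard : ({p, q} : Finset V).card = 2 := Finset.card_pair hne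
  have hD : G.IsCDS ↑({p, q} : Finset V) := by rwa [Finset.coe_pair, isCDS_pair_iff hne]
  rw [cdn_eq_card_of_isCDS hD fun D hD' => hcard ▸ two_le_card_of_isCDS hw hD', hcard]

theorem cdn_eq_three {c p q : V} (hp : G.Adj c p) (hq : G.Adj c q) (hpq : p ≠ q)
    (hdom : ∀ z, z = c ∨ z = p ∨ z = q ∨ G.Adj c z ∨ G.Adj p z ∨ G.Adj q z)
    (hw : ∀ w, ∃ z ≠ w, ¬G.Adj w z) (he : ∀ p q, ¬G.IsDominatingEdge p q) : G.cdn = 3 := by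
  classical
  have hcard : ({c, p, q} : Finset V).card = 3 :=
    Finset.card_eq_three.2 ⟨c, p, q, hp.ne, hq.ne, hpq, rfl⟩
  have hD : G.IsCDS ↑({c, p, q} : Finset V) := by
    rw [Finset.coe_insert, Finset.coe_pair]
    exact isCDS_of_adj_of_adj hp hq hdom
  rw [cdn_eq_card_of_isCDS hD fun D hD' => hcard ▸ three_le_card_of_isCDS hw he hD', hcard]

end Finite

namespace G1Witness

variable {s : ℕ} {A : ℕ → V} {B : ℕ → Finset V} {x bb : V} {i j k : ℕ} {c d p q u v w z : V}

theorem two_le (h : G.G1Witness s A B x bb) : 2 ≤ s := h.1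

theorem A_inj (h : G.G1Witness s A B x bb) (hi : i ≤ s) (hj : j ≤ s) : A i = A j ↔ i = j :=
  ⟨h.2.1 i hi j hj, congrArg A⟩

theorem B_nonempty (h : G.G1Witness s A B x bb) (hj : j < s) : (B j).Nonempty := h.2.2.1 j hj

theorem eq_of_mem_B (h : G.G1Witness s A B x bb) (hj : j < s) (hk : k < s) (hcj : c ∈ B j)
    (hck : c ∈ B k) : j = k := by
  by_contra hjk
  exact Finset.disjoint_left.1 (h.2.2.2.1 j hj k hk hjk) hcj hck

theorem ne_of_mem_B (h : G.G1Witness s A B x bb) (hj : j < s) (hk : k < s) (hjk : j ≠ k)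
    (hc : c ∈ B j) (hd : d ∈ B k) : c ≠ d := by
  rintro rfl
  exact hjk (h.eq_of_mem_B hj hk hc hd)

theorem A_notMem_B (h : G.G1Witness s A B x bb) (hi : i ≤ s) (hj : j < s) : A i ∉ B j :=
  h.2.2.2.2.1 i hi j hj

theorem A_ne_of_mem_B (h : G.G1Witness s A B x bb) (hi : i ≤ s) (hj : j < s) (hc : c ∈ B j) :
    A i ≠ c := by
  rintro rfl
  exact h.A_notMem_B hi hj hc

theorem x_notMem_B (h : G.G1Witness s A B x bb) (hj : j < s) : x ∉ B j := h.2.2.2.2.2.1 j hj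

theorem x_ne_of_mem_B (h : G.G1Witness s A B x bb) (hj : j < s) (hc : c ∈ B j) : x ≠ c := by
  rintro rfl
  exact h.x_notMem_B hj hc

theorem x_ne_A (h : G.G1Witness s A B x bb) (hi : i ≤ s) : x ≠ A i := h.2.2.2.2.2.2.1 i hi

theorem bb_mem (h : G.G1Witness s A B x bb) : bb ∈ B 0 := h.2.2.2.2.2.2.2.1

theorem vertex_cases (h : G.G1Witness s A B x bb) (z : V) :
    (∃ i ≤ s, z = A i) ∨ (∃ j < s, z ∈ B j) ∨ z = x :=
  h.2.2.2.2.2.2.2.2.1 z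

theorem adj_iff (h : G.G1Witness s A B x bb) :
    G.Adj p q ↔ p ≠ q ∧ (G1Half s A B x bb p q ∨ G1Half s A B x bb q p) :=
  h.2.2.2.2.2.2.2.2.2 p q

theorem forall_vertex (h : G.G1Witness s A B x bb) {P : V → Prop} (hA : ∀ i ≤ s, P (A i))
    (hB : ∀ j < s, ∀ c ∈ B j, P c) (hx : P x) (z : V) : P z := by
  rcases h.vertex_cases z with ⟨i, hi, rfl⟩ | ⟨j, hj, hz⟩ | rfl
  exacts [hA i hi, hB j hj z hz, hx]

theorem adj_A_x (h : G.G1Witness s A B x bb) (hi : i < s) : G.Adj (A i) x := by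
  refine h.adj_iff.2 ⟨(h.x_ne_A hi.le).symm, Or.inl ?_⟩
  rcases Nat.eq_zero_or_pos i with rfl | hi0
  · exact Or.inl ⟨rfl, Or.inl rfl⟩
  · exact Or.inr (Or.inl ⟨i, hi0, by omega, rfl, Or.inl rfl⟩)

theorem adj_A_B (h : G.G1Witness s A B x bb) (hi : i < s) (hj : j < s) (hij : i = 0 ∨ j ≠ i)
    (hc : c ∈ B j) : G.Adj (A i) c := by
  refine h.adj_iff.2 ⟨h.A_ne_of_mem_B hi.le hj hc, Or.inl ?_⟩
  rcases Nat.eq_zero_or_pos i with rfl | hi0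
  · exact Or.inl ⟨rfl, Or.inr ⟨j, hj, hc⟩⟩
  · exact Or.inr (Or.inl ⟨i, hi0, by omega, rfl, Or.inr ⟨j, hj, hij.resolve_left (by omega), hc⟩⟩)

theorem adj_A_s_B (h : G.G1Witness s A B x bb) (hj1 : 1 ≤ j) (hj : j < s) (hc : c ∈ B j) :
    G.Adj (A s) c :=
  h.adj_iff.2 ⟨h.A_ne_of_mem_B le_rfl hj hc,
    Or.inl (Or.inr (Or.inr (Or.inl ⟨rfl, j, hj1, by omega, hc⟩)))⟩

theorem adj_x (h : G.G1Witness s A B x bb) (hzb : z ≠ bb) (hzx : z ≠ x) (hzA : z ≠ A s) :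
    G.Adj x z :=
  h.adj_iff.2 ⟨hzx.symm, Or.inl (Or.inr (Or.inr (Or.inr (Or.inl ⟨rfl, hzb, hzx, hzA⟩))))⟩

theorem adj_B_zero (h : G.G1Witness s A B x bb) (hc : c ∈ B 0) (hd : d ∈ B 0) (hcd : c ≠ d) :
    G.Adj c d :=
  h.adj_iff.2 ⟨hcd, Or.inl (Or.inr (Or.inr (Or.inr (Or.inr (Or.inr ⟨hc, hd⟩)))))⟩

theorem adj_B_B (h : G.G1Witness s A B x bb) (hj1 : 1 ≤ j) (hj : j < s) (hk1 : 1 ≤ k)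
    (hk : k < s) (hc : c ∈ B j) (hd : d ∈ B k) (hcd : c ≠ d) : G.Adj c d :=
  h.adj_iff.2 ⟨hcd, Or.inl (Or.inr (Or.inr (Or.inr (Or.inr (Or.inl
    ⟨⟨j, hj1, by omega, hc⟩, ⟨k, hk1, by omega, hd⟩⟩)))))⟩

theorem adj_A_B_zero (h : G.G1Witness s A B x bb) (hi : i < s) (hc : c ∈ B 0) : G.Adj (A i) c :=
  h.adj_A_B hi (by omega) ((eq_or_ne i 0).imp id Ne.symm) hc

theorem adj_x_of_mem_B (h : G.G1Witness s A B x bb) (hj1 : 1 ≤ j) (hj : j < s) (hc : c ∈ B j) :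
    G.Adj x c :=
  h.adj_x (h.ne_of_mem_B hj (by omega) (by omega) hc h.bb_mem) (h.x_ne_of_mem_B hj hc).symm
    (h.A_ne_of_mem_B le_rfl hj hc).symm

theorem g1Half_A (h : G.G1Witness s A B x bb) (hi : i ≤ s) (hq : G1Half s A B x bb (A i) q) :
    (i < s ∧ q = x) ∨ ∃ j < s, q ∈ B j ∧ (i = 0 ∨ j ≠ i) ∧ (i = s → j ≠ 0) := by
  have hs := h.two_le
  rcases hq with ⟨hi0, hq⟩ | ⟨i', hi'1, hi's, hii', hq⟩ | ⟨his, j, hj1, hjs, hq⟩ | ⟨hx, -⟩ |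
    ⟨⟨j, -, hjs, hB⟩, -⟩ | ⟨hB, -⟩
  · obtain rfl := (h.A_inj hi (Nat.zero_le s)).1 hi0
    rcases hq with rfl | ⟨j, hj, hq⟩
    · exact Or.inl ⟨by omega, rfl⟩
    · exact Or.inr ⟨j, hj, hq, Or.inl rfl, fun hs => absurd hs (by omega)⟩
  · obtain rfl := (h.A_inj hi (by omega)).1 hii'
    rcases hq with rfl | ⟨j, hj, hji, hq⟩
    · exact Or.inl ⟨by omega, rfl⟩
    · exact Or.inr ⟨j, hj, hq, Or.inr hji, fun hs => by omega⟩
  · obtain rfl := (h.A_inj hi le_rfl).1 his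
    exact Or.inr ⟨j, by omega, hq, Or.inr (by omega), fun _ => by omega⟩
  · exact absurd hx.symm (h.x_ne_A hi)
  · exact absurd hB (h.A_notMem_B hi (by omega))
  · exact absurd hB (h.A_notMem_B hi (by omega))

theorem g1Half_x (h : G.G1Witness s A B x bb) (hq : G1Half s A B x bb x q) : q ≠ bb ∧ q ≠ A s := by
  have hs := h.two_le
  rcases hq with ⟨hx, -⟩ | ⟨i, -, hi, hx, -⟩ | ⟨hx, -⟩ | ⟨-, hqb, -, hqA⟩ |
    ⟨⟨j, -, hj, hB⟩, -⟩ | ⟨hB, -⟩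
  · exact absurd hx (h.x_ne_A (Nat.zero_le s))
  · exact absurd hx (h.x_ne_A (by omega))
  · exact absurd hx (h.x_ne_A le_rfl)
  · exact ⟨hqb, hqA⟩
  · exact absurd hB (h.x_notMem_B (by omega))
  · exact absurd hB (h.x_notMem_B (by omega))

theorem g1Half_B (h : G.G1Witness s A B x bb) (hj : j < s) (hp : p ∈ B j)
    (hq : G1Half s A B x bb p q) : ∃ k < s, q ∈ B k ∧ (j = 0 ↔ k = 0) := by
  rcases hq with ⟨rfl, -⟩ | ⟨i, -, hi, rfl, -⟩ | ⟨rfl, -⟩ | ⟨rfl, -⟩ |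
    ⟨⟨j', hj'1, hj', hp'⟩, ⟨k, hk1, hk, hq⟩⟩ | ⟨hp', hq⟩
  · exact absurd hp (h.A_notMem_B (Nat.zero_le s) hj)
  · exact absurd hp (h.A_notMem_B (by omega) hj)
  · exact absurd hp (h.A_notMem_B le_rfl hj)
  · exact absurd hp (h.x_notMem_B hj)
  · obtain rfl := h.eq_of_mem_B hj (by omega) hp hp'
    exact ⟨k, by omega, hq, by omega⟩
  · obtain rfl := h.eq_of_mem_B hj (by omega) hp hp'
    exact ⟨0, by omega, hq, Iff.rfl⟩

theorem not_adj_A_A (h : G.G1Witness s A B x bb) (hi : i ≤ s) (hj : j ≤ s) :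
    ¬G.Adj (A i) (A j) := by
  have key : ∀ {i j}, i ≤ s → j ≤ s → ¬G1Half s A B x bb (A i) (A j) := fun hi hj hh => by
    rcases h.g1Half_A hi hh with ⟨-, hx⟩ | ⟨l, hl, hB, -⟩
    exacts [h.x_ne_A hj hx.symm, h.A_notMem_B hj hl hB]
  rw [h.adj_iff]
  rintro ⟨-, hh | hh⟩
  exacts [key hi hj hh, key hj hi hh]

theorem not_adj_x_A_s (h : G.G1Witness s A B x bb) : ¬G.Adj x (A s) := by
  rw [h.adj_iff]
  rintro ⟨-, hh | hh⟩
  · exact (h.g1Half_x hh).2 rfl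
  · rcases h.g1Half_A le_rfl hh with ⟨hs, -⟩ | ⟨l, hl, hB, -⟩
    exacts [lt_irrefl s hs, h.x_notMem_B hl hB]

theorem not_adj_x_bb (h : G.G1Witness s A B x bb) : ¬G.Adj x bb := by
  rw [h.adj_iff]
  rintro ⟨-, hh | hh⟩
  · exact (h.g1Half_x hh).1 rfl
  · obtain ⟨k, hk, hB, -⟩ := h.g1Half_B (by have := h.two_le; omega) h.bb_mem hh
    exact h.x_notMem_B hk hB

theorem not_adj_A_s_B_zero (h : G.G1Witness s A B x bb) (hc : c ∈ B 0) : ¬G.Adj (A s) c := by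
  have hs := h.two_le
  rw [h.adj_iff]
  rintro ⟨-, hh | hh⟩
  · rcases h.g1Half_A le_rfl hh with ⟨hs, -⟩ | ⟨l, hl, hB, -, hl0⟩
    · exact lt_irrefl s hs
    · exact hl0 rfl (h.eq_of_mem_B hl (by omega) hB hc)
  · obtain ⟨k, hk, hB, -⟩ := h.g1Half_B (by omega) hc hh
    exact h.A_notMem_B le_rfl hk hB

theorem not_adj_A_B_self (h : G.G1Witness s A B x bb) (hi1 : 1 ≤ i) (hi : i < s)
    (hc : c ∈ B i) : ¬G.Adj (A i) c := by
  rw [h.adj_iff]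
  rintro ⟨-, hh | hh⟩
  · rcases h.g1Half_A hi.le hh with ⟨-, rfl⟩ | ⟨l, hl, hB, hli, -⟩
    · exact h.x_notMem_B hi hc
    · obtain rfl := h.eq_of_mem_B hl hi hB hc
      omega
  · obtain ⟨k, hk, hB, -⟩ := h.g1Half_B hi hc hh
    exact h.A_notMem_B hi.le hk hB

theorem not_adj_B_zero_B (h : G.G1Witness s A B x bb) (hc : c ∈ B 0) (hk1 : 1 ≤ k)
    (hk : k < s) (hd : d ∈ B k) : ¬G.Adj c d := by
  rw [h.adj_iff]
  rintro ⟨-, hh | hh⟩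
  · obtain ⟨l, hl, hB, hl0⟩ := h.g1Half_B (by omega) hc hh
    have := h.eq_of_mem_B hl hk hB hd
    omega
  · obtain ⟨l, hl, hB, hl0⟩ := h.g1Half_B hk hd hh
    have := h.eq_of_mem_B hl (by omega) hB hc
    omega

theorem exists_two_not_adj (h : G.G1Witness s A B x bb) (w : V) :
    ∃ z₁ z₂, z₁ ≠ z₂ ∧ z₁ ≠ w ∧ z₂ ≠ w ∧ ¬G.Adj w z₁ ∧ ¬G.Adj w z₂ := by
  have hs := h.two_le
  obtain ⟨c, hc⟩ := h.B_nonempty (j := 1) (by omega)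
  induction w using h.forall_vertex with
  | hA i hi =>
    obtain ⟨j, k, hj, hk, hjk, hji, hki⟩ : ∃ j k, j ≤ 2 ∧ k ≤ 2 ∧ j ≠ k ∧ j ≠ i ∧ k ≠ i := by
      by_cases hi0 : i = 0
      · exact ⟨1, 2, by omega⟩
      · exact ⟨0, if i = 1 then 2 else 1, by split_ifs <;> omega⟩
    refine ⟨A j, A k, ?_, ?_, ?_, h.not_adj_A_A hi (by omega), h.not_adj_A_A hi (by omega)⟩ <;>
      rwa [ne_eq, h.A_inj (by omega) (by omega)]
  | hB j hj d hd =>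
    rcases Nat.eq_zero_or_pos j with rfl | hj1
    · exact ⟨A s, c, h.A_ne_of_mem_B le_rfl (by omega) hc, h.A_ne_of_mem_B le_rfl hj hd,
        h.ne_of_mem_B (by omega) hj (by omega) hc hd, fun ha => h.not_adj_A_s_B_zero hd ha.symm,
        h.not_adj_B_zero_B hd le_rfl (by omega) hc⟩
    · exact ⟨A j, bb, h.A_ne_of_mem_B hj.le (by omega) h.bb_mem, h.A_ne_of_mem_B hj.le hj hd,
        h.ne_of_mem_B (by omega) hj (by omega) h.bb_mem hd,
        fun ha => h.not_adj_A_B_self hj1 hj hd ha.symm,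
        fun ha => h.not_adj_B_zero_B h.bb_mem hj1 hj hd ha.symm⟩
  | hx =>
    exact ⟨bb, A s, (h.A_ne_of_mem_B le_rfl (by omega) h.bb_mem).symm,
      (h.x_ne_of_mem_B (by omega) h.bb_mem).symm, (h.x_ne_A le_rfl).symm, h.not_adj_x_bb,
      h.not_adj_x_A_s⟩

theorem exists_ne_not_adj (h : G.G1Witness s A B x bb) (w : V) : ∃ z ≠ w, ¬G.Adj w z :=
  let ⟨z, _, _, hzw, _, hz, _⟩ := h.exists_two_not_adj w
  ⟨z, hzw, hz⟩

theorem dominates_A_zero_x_B_one (h : G.G1Witness s A B x bb) (hc : c ∈ B 1) (z : V) :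
    z = A 0 ∨ z = x ∨ z = c ∨ G.Adj (A 0) z ∨ G.Adj x z ∨ G.Adj c z := by
  have hs := h.two_le
  induction z using h.forall_vertex with
  | hA m hm =>
    rcases hm.lt_or_eq with hm | rfl
    · exact Or.inr (Or.inr (Or.inr (Or.inr (Or.inl (h.adj_A_x hm).symm))))
    · exact Or.inr (Or.inr (Or.inr (Or.inr (Or.inr (h.adj_A_s_B le_rfl (by omega) hc).symm))))
  | hB l hl d hd =>
    exact Or.inr (Or.inr (Or.inr (Or.inl (h.adj_A_B (by omega) hl (Or.inl rfl) hd))))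
  | hx => exact Or.inr (Or.inl rfl)

theorem mem_B_of_adj_A_s (h : G.G1Witness s A B x bb) (hw : G.Adj w (A s)) :
    ∃ k, 1 ≤ k ∧ k < s ∧ w ∈ B k := by
  rcases h.vertex_cases w with ⟨i, hi, rfl⟩ | ⟨k, hk, hwk⟩ | rfl
  · exact absurd hw (h.not_adj_A_A hi le_rfl)
  · rcases Nat.eq_zero_or_pos k with rfl | hk1
    · exact absurd hw.symm (h.not_adj_A_s_B_zero hwk)
    · exact ⟨k, hk1, hk, hwk⟩
  · exact absurd hw h.not_adj_x_A_s

theorem mem_B_zero_or_eq_A_of_adj_bb (h : G.G1Witness s A B x bb) (hw : G.Adj w bb) :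
    w ∈ B 0 ∨ ∃ i < s, w = A i := by
  rcases h.vertex_cases w with ⟨i, hi, rfl⟩ | ⟨k, hk, hwk⟩ | rfl
  · rcases hi.lt_or_eq with hi | rfl
    · exact Or.inr ⟨i, hi, rfl⟩
    · exact absurd hw (h.not_adj_A_s_B_zero h.bb_mem)
  · rcases Nat.eq_zero_or_pos k with rfl | hk1
    · exact Or.inl hwk
    · exact absurd hw.symm (h.not_adj_B_zero_B h.bb_mem hk1 hk hwk)
  · exact absurd hw h.not_adj_x_bb

theorem not_isDominatingEdge_of_mem (h : G.G1Witness s A B x bb)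
    (hp : p = A s ∨ ∃ k, 1 ≤ k ∧ k < s ∧ p ∈ B k) (hq : q ∈ B 0 ∨ ∃ i < s, q = A i) :
    ¬G.IsDominatingEdge p q := by
  rintro ⟨hpq, hdom⟩
  rcases hp with rfl | ⟨k, hk1, hk, hpk⟩ <;> rcases hq with hq0 | ⟨i, hi, rfl⟩
  · exact h.not_adj_A_s_B_zero hq0 hpq
  · exact h.not_adj_A_A le_rfl hi.le hpq
  · exact h.not_adj_B_zero_B hq0 hk1 hk hpk hpq.symm
  · obtain rfl | hik := eq_or_ne i k
    · exact h.not_adj_A_B_self hk1 hk hpk hpq.symm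
    · rcases hdom (A k) with he | he | ha | ha
      · exact h.A_ne_of_mem_B hk.le hk hpk he
      · exact hik ((h.A_inj hk.le hi.le).1 he).symm
      · exact h.not_adj_A_B_self hk1 hk hpk ha.symm
      · exact h.not_adj_A_A hi.le hk.le ha

theorem not_isDominatingEdge (h : G.G1Witness s A B x bb) (p q : V) :
    ¬G.IsDominatingEdge p q := by
  have hs := h.two_le
  intro hD
  have hP : ∀ w, A s = w ∨ G.Adj w (A s) → w = A s ∨ ∃ k, 1 ≤ k ∧ k < s ∧ w ∈ B k :=
    fun w => Or.imp Eq.symm h.mem_B_of_adj_A_s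
  have hQ : ∀ w, bb = w ∨ G.Adj w bb → w ∈ B 0 ∨ ∃ i < s, w = A i :=
    fun _ hw => hw.elim (fun e => Or.inl (e ▸ h.bb_mem)) h.mem_B_zero_or_eq_A_of_adj_bb
  have hPQ : ∀ w, (w = A s ∨ ∃ k, 1 ≤ k ∧ k < s ∧ w ∈ B k) → (w ∈ B 0 ∨ ∃ i < s, w = A i) →
      False := by
    rintro w (rfl | ⟨k, hk1, hk, hwk⟩) (hw0 | ⟨i, hi, hwi⟩)
    · exact h.A_notMem_B le_rfl (by omega) hw0
    · exact hi.ne' ((h.A_inj le_rfl hi.le).1 hwi)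
    · exact h.ne_of_mem_B hk (by omega) (by omega) hwk hw0 rfl
    · exact h.A_notMem_B hi.le hk (hwi ▸ hwk)
  have hAs : (A s = p ∨ G.Adj p (A s)) ∨ (A s = q ∨ G.Adj q (A s)) := by
    rcases hD.2 (A s) with hz | hz | hz | hz <;> tauto
  have hbb : (bb = p ∨ G.Adj p bb) ∨ (bb = q ∨ G.Adj q bb) := by
    rcases hD.2 bb with hz | hz | hz | hz <;> tauto
  rcases hAs with hp | hq <;> rcases hbb with hp' | hq'
  · exact hPQ p (hP p hp) (hQ p hp')
  · exact h.not_isDominatingEdge_of_mem (hP p hp) (hQ q hq') hD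
  · exact h.not_isDominatingEdge_of_mem (hP q hq) (hQ p hp') hD.symm
  · exact hPQ q (hP q hq) (hQ q hq')

theorem dominates_A_x_of_ne_A_s (h : G.G1Witness s A B x bb) (hi : i < s) (hz : z ≠ A s) :
    z = A i ∨ z = x ∨ G.Adj (A i) z ∨ G.Adj x z := by
  by_cases hzb : z = bb
  · exact Or.inr (Or.inr (Or.inl (hzb ▸ h.adj_A_B_zero hi h.bb_mem)))
  by_cases hzx : z = x
  · exact Or.inr (Or.inl hzx)
  · exact Or.inr (Or.inr (Or.inr (h.adj_x hzb hzx hz)))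

theorem isDominatingEdge_addEdge_A_A (h : G.G1Witness s A B x bb) (hi : i < s) (hj1 : 1 ≤ j)
    (hj : j < s) (hij : i ≠ j) (hc : c ∈ B j) :
    (G.addEdge (A i) (A j)).IsDominatingEdge (A i) c := by
  refine isDominatingEdge_addEdge ((h.adj_A_B hi hj (Or.inr hij.symm) hc).addEdge _ _)
    (Or.inl rfl) (by rwa [ne_eq, h.A_inj hi.le hj.le]) fun z hz => ?_
  induction z using h.forall_vertex with
  | hA m hm =>
    have hmj : m ≠ j := fun e => hz (e ▸ rfl)
    rcases hm.lt_or_eq with hm | rfl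
    · exact Or.inr (Or.inr (Or.inr (h.adj_A_B hm hj (Or.inr hmj.symm) hc).symm))
    · exact Or.inr (Or.inr (Or.inr (h.adj_A_s_B hj1 hj hc).symm))
  | hB l hl d hd =>
    by_cases hli : i = 0 ∨ l ≠ i
    · exact Or.inr (Or.inr (Or.inl (h.adj_A_B hi hl hli hd)))
    · obtain ⟨hi0, rfl⟩ : i ≠ 0 ∧ l = i := by tauto
      exact Or.inr (Or.inr (Or.inr (h.adj_B_B hj1 hj (by omega) hl hc hd
        (h.ne_of_mem_B hj hl hij.symm hc hd))))
  | hx => exact Or.inr (Or.inr (Or.inl (h.adj_A_x hi)))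

theorem isDominatingEdge_addEdge_A_A_s (h : G.G1Witness s A B x bb) (hi : i < s) :
    (G.addEdge (A i) (A s)).IsDominatingEdge (A i) x :=
  isDominatingEdge_addEdge ((h.adj_A_x hi).addEdge _ _) (Or.inl rfl)
    (by rw [ne_eq, h.A_inj hi.le le_rfl]; omega) fun _ => h.dominates_A_x_of_ne_A_s hi

theorem isDominatingEdge_addEdge_x_A_s (h : G.G1Witness s A B x bb) :
    (G.addEdge x (A s)).IsDominatingEdge (A 0) x :=
  isDominatingEdge_addEdge ((h.adj_A_x (by have := h.two_le; omega)).addEdge _ _) (Or.inr rfl)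
    (h.x_ne_A le_rfl) fun _ => h.dominates_A_x_of_ne_A_s (by have := h.two_le; omega)

theorem isDominatingEdge_addEdge_A_B_self (h : G.G1Witness s A B x bb) (hi1 : 1 ≤ i) (hi : i < s)
    (hc : c ∈ B i) : (G.addEdge (A i) c).IsDominatingEdge (A i) c := by
  have hAc := h.A_ne_of_mem_B hi.le hi hc
  refine isDominatingEdge_addEdge (addEdge_adj_self hAc) (Or.inl rfl) hAc fun z hz => ?_
  induction z using h.forall_vertex with
  | hA m hm =>
    rcases eq_or_ne m i with rfl | hmi
    · exact Or.inl rfl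
    rcases hm.lt_or_eq with hm | rfl
    · exact Or.inr (Or.inr (Or.inr (h.adj_A_B hm hi (Or.inr hmi.symm) hc).symm))
    · exact Or.inr (Or.inr (Or.inr (h.adj_A_s_B hi1 hi hc).symm))
  | hB l hl d hd =>
    rcases eq_or_ne l i with rfl | hli
    · exact Or.inr (Or.inr (Or.inr (h.adj_B_B hi1 hi hi1 hi hc hd (Ne.symm hz))))
    · exact Or.inr (Or.inr (Or.inl (h.adj_A_B hi hl (Or.inr hli) hd)))
  | hx => exact Or.inr (Or.inr (Or.inl (h.adj_A_x hi)))

theorem isDominatingEdge_addEdge_B_zero_A_s (h : G.G1Witness s A B x bb) (hc : c ∈ B 0) :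
    (G.addEdge c (A s)).IsDominatingEdge (A 0) c := by
  have hs := h.two_le
  refine isDominatingEdge_addEdge ((h.adj_A_B_zero (by omega) hc).addEdge _ _) (Or.inr rfl)
    (h.A_ne_of_mem_B le_rfl (by omega) hc).symm fun z hz => ?_
  induction z using h.forall_vertex with
  | hA m hm =>
    have hms : m < s := hm.lt_of_ne fun e => hz (e ▸ rfl)
    exact Or.inr (Or.inr (Or.inr (h.adj_A_B_zero hms hc).symm))
  | hB l hl d hd => exact Or.inr (Or.inr (Or.inl (h.adj_A_B (by omega) hl (Or.inl rfl) hd)))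
  | hx => exact Or.inr (Or.inr (Or.inl (h.adj_A_x (by omega))))

theorem isDominatingEdge_addEdge_x_bb (h : G.G1Witness s A B x bb) (hc : c ∈ B 1) :
    (G.addEdge x bb).IsDominatingEdge x c := by
  have hs := h.two_le
  refine isDominatingEdge_addEdge ((h.adj_x_of_mem_B le_rfl (by omega) hc).addEdge _ _)
    (Or.inl rfl) (h.x_ne_of_mem_B (by omega) h.bb_mem) fun z hzb => ?_
  by_cases hzx : z = x
  · exact Or.inl hzx
  by_cases hzA : z = A s
  · exact Or.inr (Or.inr (Or.inr (hzA ▸ (h.adj_A_s_B le_rfl (by omega) hc).symm)))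
  · exact Or.inr (Or.inr (Or.inl (h.adj_x hzb hzx hzA)))

theorem isDominatingEdge_addEdge_B_zero_B (h : G.G1Witness s A B x bb) (hc : c ∈ B 0)
    (hk1 : 1 ≤ k) (hk : k < s) (hd : d ∈ B k) : (G.addEdge c d).IsDominatingEdge c d := by
  have hcd := h.ne_of_mem_B (by omega) hk (by omega) hc hd
  refine isDominatingEdge_addEdge (addEdge_adj_self hcd) (Or.inl rfl) hcd fun z hz => ?_
  induction z using h.forall_vertex with
  | hA m hm =>
    rcases hm.lt_or_eq with hm | rfl
    · exact Or.inr (Or.inr (Or.inl (h.adj_A_B_zero hm hc).symm))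
    · exact Or.inr (Or.inr (Or.inr (h.adj_A_s_B hk1 hk hd).symm))
  | hB l hl e he =>
    rcases Nat.eq_zero_or_pos l with rfl | hl1
    · rcases eq_or_ne e c with rfl | hec
      · exact Or.inl rfl
      · exact Or.inr (Or.inr (Or.inl (h.adj_B_zero hc he hec.symm)))
    · exact Or.inr (Or.inr (Or.inr (h.adj_B_B hk1 hk hl1 hl hd he (Ne.symm hz))))
  | hx => exact Or.inr (Or.inr (Or.inr (h.adj_x_of_mem_B hk1 hk hd).symm))

theorem exists_isDominatingEdge_addEdge_A (h : G.G1Witness s A B x bb) (hi : i ≤ s)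
    (hv : A i ≠ v) (hnadj : ¬G.Adj (A i) v) : ∃ p q, (G.addEdge (A i) v).IsDominatingEdge p q := by
  rcases h.vertex_cases v with ⟨j, hj, rfl⟩ | ⟨j, hj, hvj⟩ | rfl
  · have hij : i ≠ j := fun e => hv (e ▸ rfl)
    rcases hi.lt_or_eq with hi | rfl
    · rcases hj.lt_or_eq with hj | rfl
      · rcases Nat.eq_zero_or_pos j with rfl | hj1
        · obtain ⟨c, hc⟩ := h.B_nonempty hi
          rw [addEdge_comm]
          exact ⟨_, _, h.isDominatingEdge_addEdge_A_A hj (by omega) hi hij.symm hc⟩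
        · obtain ⟨c, hc⟩ := h.B_nonempty hj
          exact ⟨_, _, h.isDominatingEdge_addEdge_A_A hi hj1 hj hij hc⟩
      · exact ⟨_, _, h.isDominatingEdge_addEdge_A_A_s hi⟩
    · rw [addEdge_comm]
      exact ⟨_, _, h.isDominatingEdge_addEdge_A_A_s (hj.lt_of_ne hij.symm)⟩
  · rcases hi.lt_or_eq with hi | rfl
    · by_cases hij : i = 0 ∨ j ≠ i
      · exact absurd (h.adj_A_B hi hj hij hvj) hnadj
      · obtain ⟨hi0, rfl⟩ : i ≠ 0 ∧ j = i := by tauto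
        exact ⟨_, _, h.isDominatingEdge_addEdge_A_B_self (by omega) hi hvj⟩
    · rcases Nat.eq_zero_or_pos j with rfl | hj1
      · rw [addEdge_comm]
        exact ⟨_, _, h.isDominatingEdge_addEdge_B_zero_A_s hvj⟩
      · exact absurd (h.adj_A_s_B hj1 hj hvj) hnadj
  · rcases hi.lt_or_eq with hi | rfl
    · exact absurd (h.adj_A_x hi) hnadj
    · rw [addEdge_comm]
      exact ⟨_, _, h.isDominatingEdge_addEdge_x_A_s⟩

theorem exists_isDominatingEdge_addEdge_x (h : G.G1Witness s A B x bb) (hj : j < s)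
    (hv : v ∈ B j) (hnadj : ¬G.Adj x v) : ∃ p q, (G.addEdge x v).IsDominatingEdge p q := by
  have hs := h.two_le
  obtain rfl : v = bb := by
    by_contra hvb
    exact hnadj (h.adj_x hvb (h.x_ne_of_mem_B hj hv).symm (h.A_ne_of_mem_B le_rfl hj hv).symm)
  obtain ⟨c, hc⟩ := h.B_nonempty (j := 1) (by omega)
  exact ⟨_, _, h.isDominatingEdge_addEdge_x_bb hc⟩

theorem exists_isDominatingEdge_addEdge_B (h : G.G1Witness s A B x bb) (hj : j < s)
    (hu : u ∈ B j) (hk : k < s) (hv : v ∈ B k) (huv : u ≠ v) (hnadj : ¬G.Adj u v) :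
    ∃ p q, (G.addEdge u v).IsDominatingEdge p q := by
  rcases Nat.eq_zero_or_pos j with rfl | hj1 <;> rcases Nat.eq_zero_or_pos k with rfl | hk1
  · exact absurd (h.adj_B_zero hu hv huv) hnadj
  · exact ⟨_, _, h.isDominatingEdge_addEdge_B_zero_B hu hk1 hk hv⟩
  · rw [addEdge_comm]
    exact ⟨_, _, h.isDominatingEdge_addEdge_B_zero_B hv hj1 hj hu⟩
  · exact absurd (h.adj_B_B hj1 hj hk1 hk hu hv huv) hnadj

theorem exists_isDominatingEdge_addEdge (h : G.G1Witness s A B x bb) (huv : u ≠ v)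
    (hnadj : ¬G.Adj u v) : ∃ p q, (G.addEdge u v).IsDominatingEdge p q := by
  have hnadj' : ¬G.Adj v u := fun hvu => hnadj hvu.symm
  rcases h.vertex_cases u with ⟨i, hi, rfl⟩ | ⟨j, hj, hu⟩ | rfl
  · exact h.exists_isDominatingEdge_addEdge_A hi huv hnadj
  all_goals rcases h.vertex_cases v with ⟨i, hi, rfl⟩ | ⟨k, hk, hv⟩ | rfl
  · rw [addEdge_comm]
    exact h.exists_isDominatingEdge_addEdge_A hi huv.symm hnadj'
  · exact h.exists_isDominatingEdge_addEdge_B hj hu hk hv huv hnadj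
  · rw [addEdge_comm]
    exact h.exists_isDominatingEdge_addEdge_x hj hu hnadj'
  · rw [addEdge_comm]
    exact h.exists_isDominatingEdge_addEdge_A hi huv.symm hnadj'
  · exact h.exists_isDominatingEdge_addEdge_x hk hv hnadj
  · exact absurd rfl huv

end G1Witness

end SimpleGraph

theorem stmt_12 {V : Type*} [Fintype V] (G : SimpleGraph V)
    (s : ℕ) (A : ℕ → V) (B : ℕ → Finset V) (x bb : V)
    (h : G.G1Witness s A B x bb) :
    G.cdn = 3 ∧ ∀ u v : V, u ≠ v → ¬G.Adj u v → (G.addEdge u v).cdn = 2 := by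
  have hs := h.two_le
  obtain ⟨c, hc⟩ := h.B_nonempty (j := 1) (by omega)
  refine ⟨cdn_eq_three (h.adj_A_x (by omega)) (h.adj_A_B (by omega) (by omega) (Or.inl rfl) hc)
    (h.x_ne_of_mem_B (by omega) hc) (h.dominates_A_zero_x_B_one hc) h.exists_ne_not_adj
    h.not_isDominatingEdge, fun u v huv hnadj => ?_⟩
  obtain ⟨p, q, hpq⟩ := h.exists_isDominatingEdge_addEdge huv hnadj
  exact cdn_eq_two hpq (exists_ne_not_adj_addEdge h.exists_two_not_adj u v)
end

section
/- If a graph G is Hamiltonian connected, then for every vertex cut S of G, the number of components of G − S is at most |S| − 1. -/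
open SimpleGraph Finset

variable {V : Type*}

/-- `G` is Hamiltonian connected: every two vertices are joined by a Hamiltonian path. -/
def SimpleGraph.HamiltonianConnected {V : Type*} [DecidableEq V] (G : SimpleGraph V) : Prop :=
  ∀ u v : V, u ≠ v → ∃ p : G.Walk u v, p.IsHamiltonian

/-!
Take a Hamiltonian path `p` from `x ∈ S` to `v ∈ S`, `x ≠ v`. Every component `C` of `G - S`
is entered by `p` for the first time from a vertex outside `C`, which must then lie in `S`; it is
not `v`, the last vertex of `p`, and distinct components are entered from distinct vertices since
`p` is a path. This injects the components into `S \ {v}`. When `|S| ≤ 1` the same injection (or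
the connectivity of `G` itself) shows that `G - S` is connected, so `S` is not a cut unless
`G - S` is empty.
-/

namespace SimpleGraph

variable {G : SimpleGraph V}

lemma HamiltonianConnected.preconnected [DecidableEq V] (hG : G.HamiltonianConnected) :
    G.Preconnected := by
  intro u w
  obtain rfl | huw := eq_or_ne u w
  · rfl
  · obtain ⟨p, -⟩ := hG u w huw
    exact p.reachable

lemma preconnected_of_card_connectedComponent_le_one [Finite V]
    (h : Nat.card G.ConnectedComponent ≤ 1) : G.Preconnected := by
  have := Finite.card_le_one_iff_subsingleton.mp h
  exact fun v w => ConnectedComponent.exact (Subsingleton.elim _ _)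

namespace Walk

lemma exists_getVert_entry {u v : V} (p : G.Walk u v) {T : Set V} (hu : u ∉ T) {n : ℕ}
    (hn : p.getVert n ∈ T) : ∃ m < n, p.getVert m ∉ T ∧ p.getVert (m + 1) ∈ T := by
  classical
  have h : ∃ k, p.getVert k ∈ T := ⟨n, hn⟩
  have hpos : 0 < Nat.find h := by
    rw [Nat.pos_iff_ne_zero, Ne, Nat.find_eq_zero, getVert_zero]
    exact hu
  refine ⟨Nat.find h - 1, by have := Nat.find_min' h hn; omega,
    Nat.find_min h (by omega), ?_⟩
  simpa [Nat.sub_add_cancel hpos] using Nat.find_spec h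

theorem IsHamiltonian.card_connectedComponent_induce_compl_le [DecidableEq V] {S : Finset V}
    {u v : V} {p : G.Walk u v} (hp : p.IsHamiltonian) (hu : u ∈ S) :
    Nat.card (G.induce (↑S : Set V)ᶜ).ConnectedComponent ≤ (S.erase v).card := by
  have hentry : ∀ C : (G.induce (↑S : Set V)ᶜ).ConnectedComponent, ∃ m < p.length,
      p.getVert m ∉ Subtype.val '' C.supp ∧ p.getVert (m + 1) ∈ Subtype.val '' C.supp := by
    intro C
    obtain ⟨w, hw⟩ := C.nonempty_supp
    obtain ⟨n, hn, hnl⟩ := mem_support_iff_exists_getVert.mp (hp.mem_support w)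
    obtain ⟨m, hmn, hout, hin⟩ := p.exists_getVert_entry (T := Subtype.val '' C.supp)
      (by rintro ⟨x, -, hx⟩; exact x.2 (hx ▸ hu)) ⟨w, hw, hn.symm⟩
    exact ⟨m, hmn.trans_le hnl, hout, hin⟩
  choose m hml hout hin using hentry
  have hS : ∀ C, p.getVert (m C) ∈ S := by
    intro C
    by_contra hnot
    obtain ⟨w, hw, hwm⟩ := hin C
    have hadj : (G.induce (↑S : Set V)ᶜ).Adj ⟨_, hnot⟩ w := by
      simpa [hwm] using p.adj_getVert_succ (hml C)
    exact hout C ⟨_, (ConnectedComponent.connectedComponentMk_eq_of_adj hadj).trans hw, rfl⟩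
  have hv : ∀ C, p.getVert (m C) ≠ v := fun C => by
    rw [Ne, hp.isPath.getVert_eq_end_iff (hml C).le]
    exact (hml C).ne
  let f C : S.erase v := ⟨p.getVert (m C), mem_erase.mpr ⟨hv C, hS C⟩⟩
  have hf : Function.Injective f := by
    intro C₁ C₂ h
    have hm : m C₁ = m C₂ :=
      hp.isPath.getVert_injOn (hml C₁).le (hml C₂).le (congrArg Subtype.val h)
    obtain ⟨w₁, hw₁, h₁⟩ := hin C₁
    obtain ⟨w₂, hw₂, h₂⟩ := hin C₂
    obtain rfl : w₁ = w₂ := Subtype.ext (h₁.trans (hm ▸ h₂.symm))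
    exact hw₁.symm.trans hw₂
  exact (Nat.card_le_card_of_injective f hf).trans_eq (Nat.card_eq_finsetCard _)

end Walk

end SimpleGraph

theorem stmt_18 {V : Type*} [Fintype V] [DecidableEq V] (G : SimpleGraph V)
    (hG : G.HamiltonianConnected) (S : Finset V) (hS : G.IsVertexCut S) :
    Nat.card ((G.induce ((↑S : Set V)ᶜ)).ConnectedComponent) ≤ S.card - 1 := by
  obtain hSc | hSc := isEmpty_or_nonempty ↥((↑S : Set V)ᶜ)
  · simp
  have hdisc : ¬(G.induce ((↑S : Set V)ᶜ)).Preconnected := fun h => hS ⟨h⟩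
  obtain rfl | ⟨x, hx⟩ := S.eq_empty_or_nonempty
  · rw [Finset.coe_empty, Set.compl_empty] at hdisc
    exact absurd ((induceUnivIso G).preconnected_iff.mpr hG.preconnected) hdisc
  by_cases hSx : ∃ v ∈ S, v ≠ x
  · obtain ⟨v, hv, hvx⟩ := hSx
    obtain ⟨p, hp⟩ := hG x v hvx.symm
    calc _ ≤ (S.erase v).card := hp.card_connectedComponent_induce_compl_le hx
      _ = S.card - 1 := card_erase_of_mem hv
  · push Not at hSx
    obtain ⟨a⟩ := hSc
    have hax : x ≠ a := fun h => a.2 (h ▸ hx)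
    obtain ⟨p, hp⟩ := hG x a hax
    refine absurd (preconnected_of_card_connectedComponent_le_one ?_) hdisc
    calc _ ≤ (S.erase a).card := hp.card_connectedComponent_induce_compl_le hx
      _ ≤ S.card := card_erase_le
      _ ≤ 1 := card_le_one.mpr fun y hy z hz => (hSx y hy).trans (hSx z hz).symm
end
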